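/- arXiv:1909.04554 — 2 statements merged into one kernel-verified Lean document; each statement's English description precedes it below -/
import Mathlib

section
/- (Theorem 4 for R1: livelock-freedom and hop-minimality) For all s, d ∈ V, the route generated by R1 from s toward d — the sequence v_0 = s and v_{i+1} = head of the unique arc in R1(v_i, d) — reaches d after exactly |s_x − d_x| + |s_y − d_y| + |s_z − d_z| steps; in particular every packet routed by R1 reaches its destination after finitely many hops. -/
/-- Routers are triples `(x, y, z)` of natural numbers. -/
abbrev Vtx : Type := ℕ × ℕ × ℕ

/-- Membership in the vertex set `V` of the 3D mesh topology digraph with `L` layers,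
`m z` rows and `n z` columns in layer `z`. -/
def memV (L : ℕ) (m n : ℕ → ℕ) (v : Vtx) : Prop :=
  1 ≤ v.1 ∧ v.1 ≤ n v.2.2 ∧ 1 ≤ v.2.1 ∧ v.2.1 ≤ m v.2.2 ∧ 1 ≤ v.2.2 ∧ v.2.2 ≤ L

/-- Neighbor of `v` to the east: `(x+1, y, z)`. -/
def eastN (v : Vtx) : Vtx := (v.1 + 1, v.2.1, v.2.2)
/-- Neighbor of `v` to the west: `(x-1, y, z)`. -/
def westN (v : Vtx) : Vtx := (v.1 - 1, v.2.1, v.2.2)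
/-- Neighbor of `v` to the north: `(x, y-1, z)`. -/
def northN (v : Vtx) : Vtx := (v.1, v.2.1 - 1, v.2.2)
/-- Neighbor of `v` to the south: `(x, y+1, z)`. -/
def southN (v : Vtx) : Vtx := (v.1, v.2.1 + 1, v.2.2)
/-- Neighbor of `v` upwards: `(x, y, z-1)`. -/
def upN (v : Vtx) : Vtx := (v.1, v.2.1, v.2.2 - 1)
/-- Neighbor of `v` downwards: `(x, y, z+1)`. -/
def downN (v : Vtx) : Vtx := (v.1, v.2.1, v.2.2 + 1)

/-- The arc set `A` of the topology digraph: both endpoints lie in `V` and the head is a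
unit neighbor of the tail (east, west, south, north, down or up). -/
def inA (L : ℕ) (m n : ℕ → ℕ) (a : Vtx × Vtx) : Prop :=
  memV L m n a.1 ∧ memV L m n a.2 ∧
    ((a.2.1 = a.1.1 + 1 ∧ a.2.2.1 = a.1.2.1 ∧ a.2.2.2 = a.1.2.2) ∨   -- east
     (a.2.1 + 1 = a.1.1 ∧ a.2.2.1 = a.1.2.1 ∧ a.2.2.2 = a.1.2.2) ∨   -- west
     (a.2.1 = a.1.1 ∧ a.2.2.1 = a.1.2.1 + 1 ∧ a.2.2.2 = a.1.2.2) ∨   -- south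
     (a.2.1 = a.1.1 ∧ a.2.2.1 + 1 = a.1.2.1 ∧ a.2.2.2 = a.1.2.2) ∨   -- north
     (a.2.1 = a.1.1 ∧ a.2.2.1 = a.1.2.1 ∧ a.2.2.2 = a.1.2.2 + 1) ∨   -- down
     (a.2.1 = a.1.1 ∧ a.2.2.1 = a.1.2.1 ∧ a.2.2.2 + 1 = a.1.2.2))    -- up

/-- An arc has direction north: same x, smaller y, same z. -/
def dirNorth (a : Vtx × Vtx) : Prop :=
  a.2.1 = a.1.1 ∧ a.2.2.1 < a.1.2.1 ∧ a.2.2.2 = a.1.2.2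
/-- An arc has direction east: larger x, same y, same z. -/
def dirEast (a : Vtx × Vtx) : Prop :=
  a.1.1 < a.2.1 ∧ a.2.2.1 = a.1.2.1 ∧ a.2.2.2 = a.1.2.2
/-- An arc has direction south: same x, larger y, same z. -/
def dirSouth (a : Vtx × Vtx) : Prop :=
  a.2.1 = a.1.1 ∧ a.1.2.1 < a.2.2.1 ∧ a.2.2.2 = a.1.2.2
/-- An arc has direction west: smaller x, same y, same z. -/
def dirWest (a : Vtx × Vtx) : Prop :=
  a.2.1 < a.1.1 ∧ a.2.2.1 = a.1.2.1 ∧ a.2.2.2 = a.1.2.2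
/-- An arc has direction up: smaller z. -/
def dirUp (a : Vtx × Vtx) : Prop := a.2.2.2 < a.1.2.2
/-- An arc has direction down: larger z. -/
def dirDown (a : Vtx × Vtx) : Prop := a.1.2.2 < a.2.2.2

/-- Arc `b` is direct dependent on arc `a` (according to routing function `R`):
both are arcs of the topology, the tail of `b` is the head of `a`, and there is a
destination `d ∈ V` such that `a ∈ R(tail a, d)` and `b ∈ R(tail b, d)`. -/
def directDep (L : ℕ) (m n : ℕ → ℕ) (R : Vtx → Vtx → Set (Vtx × Vtx))
    (a b : Vtx × Vtx) : Prop :=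
  inA L m n a ∧ inA L m n b ∧ b.1 = a.2 ∧
    ∃ d : Vtx, memV L m n d ∧ a ∈ R a.1 d ∧ b ∈ R b.1 d

/-- `(f, g)` is a possible turn according to `R`. -/
def possibleTurn (L : ℕ) (m n : ℕ → ℕ) (R : Vtx → Vtx → Set (Vtx × Vtx))
    (f g : Vtx × Vtx → Prop) : Prop :=
  ∃ a b : Vtx × Vtx, f a ∧ g b ∧ directDep L m n R a b

/-- The routing function `R1` (Z⁺XYZ⁻ routing). -/
def R1 (v d : Vtx) : Set (Vtx × Vtx) :=
  {a | a.1 = v ∧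
    ((v.1 = d.1 ∧ d.2.1 < v.2.1 ∧ d.2.2 ≤ v.2.2 ∧ a.2 = northN v) ∨
     (v.1 < d.1 ∧ d.2.2 ≤ v.2.2 ∧ a.2 = eastN v) ∨
     (v.1 = d.1 ∧ v.2.1 < d.2.1 ∧ d.2.2 ≤ v.2.2 ∧ a.2 = southN v) ∨
     (d.1 < v.1 ∧ d.2.2 ≤ v.2.2 ∧ a.2 = westN v) ∨
     (v.1 = d.1 ∧ v.2.1 = d.2.1 ∧ d.2.2 < v.2.2 ∧ a.2 = upN v) ∨
     (v.2.2 < d.2.2 ∧ a.2 = downN v))}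

/-!
Every hop prescribed by `R1` moves one unit along an axis towards the destination, so it
lowers the Manhattan distance to the destination by exactly one. The distance is therefore
a potential that counts down the remaining hops, and the route reaches `d` exactly when it
hits zero.
-/

theorem first_hit_eq_potential {α : Type*} (f : α → ℕ) (d : α) (hf : ∀ x, f x = 0 ↔ x = d)
    (p : ℕ → α) (hstep : ∀ i, p i ≠ d → f (p (i + 1)) + 1 = f (p i)) :
    p (f (p 0)) = d ∧ ∀ i < f (p 0), p i ≠ d := by
  have countdown : ∀ i ≤ f (p 0), f (p i) = f (p 0) - i := by
    intro i hi
    induction i with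
    | zero => rfl
    | succ k ih =>
      have hk := ih (by omega)
      have hne : p k ≠ d := fun h => by rw [h, (hf d).2 rfl] at hk; omega
      have := hstep k hne
      omega
  refine ⟨(hf _).1 (by simpa using countdown _ le_rfl), fun i hi h => ?_⟩
  have := countdown i hi.le
  rw [h, (hf d).2 rfl] at this
  omega

def manhattanDist (v d : Vtx) : ℕ :=
  Nat.dist v.1 d.1 + Nat.dist v.2.1 d.2.1 + Nat.dist v.2.2 d.2.2

theorem manhattanDist_eq_zero_iff {v d : Vtx} : manhattanDist v d = 0 ↔ v = d := by
  obtain ⟨x, y, z⟩ := v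
  obtain ⟨a, b, c⟩ := d
  simp only [manhattanDist, Nat.dist, Prod.mk.injEq]
  omega

theorem manhattanDist_succ_of_mem_R1 {v w d : Vtx} (h : (v, w) ∈ R1 v d) :
    manhattanDist w d + 1 = manhattanDist v d := by
  obtain ⟨-, hcase⟩ := h
  obtain ⟨x, y, z⟩ := v
  obtain ⟨a, b, c⟩ := d
  rcases hcase with ⟨h1, h2, h3, rfl⟩ | ⟨h1, h2, rfl⟩ | ⟨h1, h2, h3, rfl⟩ |
    ⟨h1, h2, rfl⟩ | ⟨h1, h2, h3, rfl⟩ | ⟨h1, rfl⟩ <;>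
    simp_all only [manhattanDist, Nat.dist, northN, eastN, southN, westN, upN, downN] <;>
    omega

theorem R1_livelock_free_general
    (s d : Vtx)
    (p : ℕ → Vtx) (hp0 : p 0 = s)
    (hstep : ∀ i, p i ≠ d → (p i, p (i + 1)) ∈ R1 (p i) d) :
    p (Nat.dist s.1 d.1 + Nat.dist s.2.1 d.2.1 + Nat.dist s.2.2 d.2.2) = d ∧
      ∀ i < Nat.dist s.1 d.1 + Nat.dist s.2.1 d.2.1 + Nat.dist s.2.2 d.2.2,
        p i ≠ d := by
  subst hp0
  exact first_hit_eq_potential (manhattanDist · d) d (fun _ => manhattanDist_eq_zero_iff) p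
    fun i hi => manhattanDist_succ_of_mem_R1 (hstep i hi)

/-- Theorem 4 for `R1` (livelock freedom and hop minimality): the route generated
by `R1` from `s` toward `d` reaches `d` after exactly
`|s_x − d_x| + |s_y − d_y| + |s_z − d_z|` steps. -/
theorem R1_livelock_free (L : ℕ) (m n : ℕ → ℕ) (hL : 2 ≤ L)
    (hm2 : ∀ z, 1 ≤ z → z ≤ L → 2 ≤ m z)
    (hn2 : ∀ z, 1 ≤ z → z ≤ L → 2 ≤ n z)
    (hmMono : ∀ z, 1 ≤ z → z < L → m z ≤ m (z + 1))
    (hnMono : ∀ z, 1 ≤ z → z < L → n z ≤ n (z + 1))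
    (s d : Vtx) (hs : memV L m n s) (hd : memV L m n d)
    (p : ℕ → Vtx) (hp0 : p 0 = s)
    (hstep : ∀ i, p i ≠ d → (p i, p (i + 1)) ∈ R1 (p i) d) :
    p (Nat.dist s.1 d.1 + Nat.dist s.2.1 d.2.1 + Nat.dist s.2.2 d.2.2) = d ∧
      ∀ i < Nat.dist s.1 d.1 + Nat.dist s.2.1 d.2.1 + Nat.dist s.2.2 d.2.2,
        p i ≠ d :=
  R1_livelock_free_general s d p hp0 hstep
end

section
/- For all v, d ∈ V with v ≠ d, the routing function R2(v, d) is a singleton and the arc it prescribes exists in A (in particular, whenever the threshold rule prescribes a down arc at v, one has v_z < Λ ≤ ℓ so the down arc exists); moreover R2(v, d) = ∅ if and only if v = d. -/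
/-- Horizontal (Manhattan) distance between the xy-coordinates of two routers. -/
def hDist (v d : Vtx) : ℕ := Nat.dist v.1 d.1 + Nat.dist v.2.1 d.2.1

/-- The routing function `R2` (ZXYZ routing) with rerouting layer `Lam` and
threshold function `Φ`. -/
def R2 (_Lam : ℕ) (Φ : ℕ → ℕ∞) (v d : Vtx) : Set (Vtx × Vtx) :=
  {a | a.1 = v ∧
    (((v.2.2 < d.2.2 ∨ (d.2.2 ≤ v.2.2 ∧ Φ v.2.2 < (hDist v d : ℕ∞))) ∧ a.2 = downN v) ∨
     (v ≠ d ∧ d.2.2 ≤ v.2.2 ∧ (hDist v d : ℕ∞) ≤ Φ v.2.2 ∧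
       ((v.1 < d.1 ∧ a.2 = eastN v) ∨
        (d.1 < v.1 ∧ a.2 = westN v) ∨
        (v.1 = d.1 ∧ d.2.1 < v.2.1 ∧ a.2 = northN v) ∨
        (v.1 = d.1 ∧ v.2.1 < d.2.1 ∧ a.2 = southN v) ∨
        (v.1 = d.1 ∧ v.2.1 = d.2.1 ∧ d.2.2 < v.2.2 ∧ a.2 = upN v))))}

/-! If `v ≠ d`, the case conditions of `R2` are mutually exclusive and exhaustive, so `R2 v d`
is the single arc from `v` to the next hop `r2NextHop Φ v d`. That arc lies in the mesh because
layers only grow downwards: once `d_z ≤ v_z`, the destination's own coordinates, viewed in the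
layer of `v` (or the one above it, for an up move), bound the move. A down move is forced either
by `v_z < d_z ≤ ℓ` or by the threshold, and the threshold can only trigger above layer `Λ ≤ ℓ`,
where `Φ` is finite. -/

lemma monotoneOn_Icc_of_le_add_one {α : Type*} [Preorder α] {f : ℕ → α} {a b : ℕ}
    (hf : ∀ z, a ≤ z → z < b → f z ≤ f (z + 1)) : MonotoneOn f (Set.Icc a b) :=
  monotoneOn_of_le_succ Set.ordConnected_Icc fun z _ hz hsucc => by
    rw [Order.succ_eq_add_one] at hsucc ⊢
    exact hf z hz.1 (Nat.lt_of_succ_le hsucc.2)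

noncomputable def r2NextHop (Φ : ℕ → ℕ∞) (v d : Vtx) : Vtx :=
  if v.2.2 < d.2.2 ∨ Φ v.2.2 < hDist v d then downN v
  else if v.1 < d.1 then eastN v
  else if d.1 < v.1 then westN v
  else if d.2.1 < v.2.1 then northN v
  else if v.2.1 < d.2.1 then southN v
  else upN v

lemma R2_self (Lam : ℕ) (Φ : ℕ → ℕ∞) (v : Vtx) : R2 Lam Φ v v = ∅ := by
  ext a
  simp [R2, hDist]

lemma R2_eq_singleton (Lam : ℕ) (Φ : ℕ → ℕ∞) {v d : Vtx} (hvd : v ≠ d) :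
    R2 Lam Φ v d = {(v, r2NextHop Φ v d)} := by
  obtain ⟨vx, vy, vz⟩ := v
  obtain ⟨dx, dy, dz⟩ := d
  ext ⟨u, w⟩
  simp only [R2, r2NextHop, Set.mem_ofPred_eq, Set.mem_singleton_iff, Prod.mk.injEq, ne_eq]
    at hvd ⊢
  generalize (hDist (vx, vy, vz) (dx, dy, dz) : ℕ∞) = h
  generalize Φ vz = φ
  split_ifs <;> grind

lemma R2_eq_empty_iff (Lam : ℕ) (Φ : ℕ → ℕ∞) (v d : Vtx) : R2 Lam Φ v d = ∅ ↔ v = d := by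
  refine ⟨fun hempty => ?_, fun hvd => hvd ▸ R2_self Lam Φ v⟩
  by_contra hvd
  simp [R2_eq_singleton Lam Φ hvd] at hempty

section Mesh

variable {L : ℕ} {m n : ℕ → ℕ} (hm : MonotoneOn m (Set.Icc 1 L))
  (hn : MonotoneOn n (Set.Icc 1 L))
include hm hn

lemma memV_of_layer_le {x y z z' : ℕ} (h : memV L m n (x, y, z)) (hzz' : z ≤ z')
    (hz' : z' ≤ L) : memV L m n (x, y, z') := by
  obtain ⟨hx1, hxn, hy1, hym, hz1, -⟩ := h
  have hzI : z ∈ Set.Icc 1 L := ⟨hz1, hzz'.trans hz'⟩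
  have hz'I : z' ∈ Set.Icc 1 L := ⟨hz1.trans hzz', hz'⟩
  exact ⟨hx1, hxn.trans (hn hzI hz'I hzz'), hy1, hym.trans (hm hzI hz'I hzz'), hz'I.1, hz'⟩

lemma inA_r2NextHop {Lam : ℕ} (hLam : Lam ≤ L) {Φ : ℕ → ℕ∞}
    (hΦ : ∀ z, Lam ≤ z → z ≤ L → Φ z = ⊤) {v d : Vtx} (hv : memV L m n v)
    (hd : memV L m n d) (hvd : v ≠ d) : inA L m n (v, r2NextHop Φ v d) := by
  obtain ⟨vx, vy, vz⟩ := v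
  obtain ⟨dx, dy, dz⟩ := d
  simp only [ne_eq, Prod.mk.injEq] at hvd
  have hvL : vz ≤ L := hv.2.2.2.2.2
  unfold r2NextHop
  split_ifs with hdown heast hwest hnorth hsouth <;> dsimp only at *
  · have hvz : vz < L := by
      rcases hdown with h | h
      · exact h.trans_le hd.2.2.2.2.2
      · by_contra! hLv
        simp [hΦ vz (hLam.trans hLv) hvL] at h
    exact ⟨hv, memV_of_layer_le hm hn hv vz.le_succ hvz, by simp [downN]⟩
  all_goals
    push Not at hdown
    have hd' := memV_of_layer_le hm hn hd hdown.1 hvL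
  · simp only [inA, memV, eastN, true_and, and_true, true_or] at hv hd' ⊢
    omega
  · simp only [inA, memV, westN, true_and, and_true] at hv hd' ⊢
    omega
  · simp only [inA, memV, northN, true_and, and_true] at hv hd' ⊢
    omega
  · simp only [inA, memV, southN, true_and, and_true, true_or, or_true] at hv hd' ⊢
    omega
  · have hdz : dz < vz := by omega
    have hd'' := memV_of_layer_le hm hn hd (Nat.le_sub_one_of_lt hdz) (by omega)
    simp only [inA, memV, upN, true_and] at hv hd'' ⊢
    omega

end Mesh

theorem R2_total_deterministic_general (L : ℕ) (m n : ℕ → ℕ)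
    (hmMono : ∀ z, 1 ≤ z → z < L → m z ≤ m (z + 1))
    (hnMono : ∀ z, 1 ≤ z → z < L → n z ≤ n (z + 1))
    (Lam : ℕ) (hLam2 : Lam ≤ L)
    (Φ : ℕ → ℕ∞)
    (hΦ : ∃ c : ℕ, (∀ z, 1 ≤ z → z < Lam → Φ z = (c : ℕ∞)) ∧
      (∀ z, Lam ≤ z → z ≤ L → Φ z = ⊤))
    (v d : Vtx) (hv : memV L m n v) (hd : memV L m n d) :
    (v ≠ d → ∃ a : Vtx × Vtx, R2 Lam Φ v d = {a} ∧ inA L m n a) ∧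
    (R2 Lam Φ v d = ∅ ↔ v = d) := by
  obtain ⟨_, -, hΦtop⟩ := hΦ
  have hm := monotoneOn_Icc_of_le_add_one hmMono
  have hn := monotoneOn_Icc_of_le_add_one hnMono
  refine ⟨fun hvd => ?_, R2_eq_empty_iff Lam Φ v d⟩
  exact ⟨_, R2_eq_singleton Lam Φ hvd, inA_r2NextHop hm hn hLam2 hΦtop hv hd hvd⟩

/-- For routers `v ≠ d`, `R2 v d` is a singleton whose arc exists in `A`;
moreover `R2 v d = ∅` iff `v = d`. -/
theorem R2_total_deterministic (L : ℕ) (m n : ℕ → ℕ) (hL : 2 ≤ L)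
    (hm2 : ∀ z, 1 ≤ z → z ≤ L → 2 ≤ m z)
    (hn2 : ∀ z, 1 ≤ z → z ≤ L → 2 ≤ n z)
    (hmMono : ∀ z, 1 ≤ z → z < L → m z ≤ m (z + 1))
    (hnMono : ∀ z, 1 ≤ z → z < L → n z ≤ n (z + 1))
    (Lam : ℕ) (hLam1 : 1 ≤ Lam) (hLam2 : Lam ≤ L)
    (Φ : ℕ → ℕ∞)
    (hΦ : ∃ c : ℕ, (∀ z, 1 ≤ z → z < Lam → Φ z = (c : ℕ∞)) ∧
      (∀ z, Lam ≤ z → z ≤ L → Φ z = ⊤))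
    (v d : Vtx) (hv : memV L m n v) (hd : memV L m n d) :
    (v ≠ d → ∃ a : Vtx × Vtx, R2 Lam Φ v d = {a} ∧ inA L m n a) ∧
    (R2 Lam Φ v d = ∅ ↔ v = d) :=
  R2_total_deterministic_general L m n hmMono hnMono Lam hLam2 Φ hΦ v d hv hd
end
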